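/- Let c ∈ ℝ and for integers n ≥ 1 define ψ_n(x) := (n² + c²)^{−1/2} √(2/π) (n cos(nx) + c sin(nx)) on [0,π]. Then ψ_n satisfies −ψ_n''(x) + c² ψ_n(x) = (n² + c²) ψ_n(x) for all x ∈ [0,π], together with the Robin boundary conditions ψ_n'(0) − c ψ_n(0) = 0 and ψ_n'(π) − c ψ_n(π) = 0. -/

import Mathlib

/-!
Both `ψₙ` and `ψₙ'` are combinations of `cos (n x)` and `sin (n x)`, so `ψₙ'' = -n² ψₙ`.
Moreover `ψₙ' - c ψₙ = -A*ψₙ = -√(n² + c²) φₙ` with `φₙ = √(2/π) sin (n ·)` the Dirichlet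
eigenfunction, which vanishes at `0` and `π`.
-/

noncomputable section

/-- The Robin eigenfunctions `ψ_n = (n²+c²)^{-1/2} A φ_n^D` on `[0,π]`. -/
def robinEigen (c : ℝ) (n : ℕ) (x : ℝ) : ℝ :=
  (Real.sqrt ((n : ℝ) ^ 2 + c ^ 2))⁻¹ * Real.sqrt (2 / Real.pi) *
    ((n : ℝ) * Real.cos ((n : ℝ) * x) + c * Real.sin ((n : ℝ) * x))

open Real

section CosSinCombination

variable (a b k : ℝ)

lemma hasDerivAt_cos_add_sin (x : ℝ) :
    HasDerivAt (fun y => a * cos (k * y) + b * sin (k * y))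
      (k * b * cos (k * x) + -(k * a) * sin (k * x)) x := by
  have hk : HasDerivAt (fun y => k * y) k x := by
    simpa using (hasDerivAt_id x).const_mul k
  have hcos := ((hasDerivAt_cos (k * x)).comp x hk).const_mul a
  have hsin := ((hasDerivAt_sin (k * x)).comp x hk).const_mul b
  exact (hcos.add hsin).congr_deriv (by ring)

lemma deriv_cos_add_sin :
    deriv (fun y => a * cos (k * y) + b * sin (k * y)) =
      fun y => k * b * cos (k * y) + -(k * a) * sin (k * y) :=
  funext fun x => (hasDerivAt_cos_add_sin a b k x).deriv

lemma deriv_deriv_cos_add_sin :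
    deriv (deriv (fun y => a * cos (k * y) + b * sin (k * y))) =
      fun y => -k ^ 2 * (a * cos (k * y) + b * sin (k * y)) := by
  rw [deriv_cos_add_sin, deriv_cos_add_sin]
  funext y
  ring

end CosSinCombination

section RobinEigen

variable (c : ℝ) (n : ℕ)

lemma robinEigen_eq_cos_add_sin :
    robinEigen c n = fun y =>
      (√((n : ℝ) ^ 2 + c ^ 2))⁻¹ * √(2 / π) * n * cos (n * y) +
        (√((n : ℝ) ^ 2 + c ^ 2))⁻¹ * √(2 / π) * c * sin (n * y) := by
  funext y
  simp only [robinEigen]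
  ring

lemma deriv_deriv_robinEigen (x : ℝ) :
    deriv (deriv (robinEigen c n)) x = -(n : ℝ) ^ 2 * robinEigen c n x := by
  rw [robinEigen_eq_cos_add_sin, deriv_deriv_cos_add_sin]

lemma deriv_robinEigen_sub_mul_robinEigen (x : ℝ) :
    deriv (robinEigen c n) x - c * robinEigen c n x =
      -(√((n : ℝ) ^ 2 + c ^ 2) * √(2 / π) * sin (n * x)) := by
  have hsqrt : (√((n : ℝ) ^ 2 + c ^ 2))⁻¹ * ((n : ℝ) ^ 2 + c ^ 2) = √((n : ℝ) ^ 2 + c ^ 2) := by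
    rw [inv_mul_eq_div, Real.div_sqrt]
  rw [robinEigen_eq_cos_add_sin, deriv_cos_add_sin]
  linear_combination -(√(2 / π) * sin (n * x)) * hsqrt

end RobinEigen

theorem robinEigen_eigenfunction_general (c : ℝ) (n : ℕ) :
    (∀ x ∈ Set.Icc (0 : ℝ) Real.pi,
      -(deriv (deriv (robinEigen c n)) x) + c ^ 2 * robinEigen c n x =
        ((n : ℝ) ^ 2 + c ^ 2) * robinEigen c n x) ∧
    deriv (robinEigen c n) 0 - c * robinEigen c n 0 = 0 ∧
    deriv (robinEigen c n) Real.pi - c * robinEigen c n Real.pi = 0 := by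
  refine ⟨fun x _ => ?_, ?_, ?_⟩
  · rw [deriv_deriv_robinEigen]
    ring
  · simp [deriv_robinEigen_sub_mul_robinEigen]
  · simp [deriv_robinEigen_sub_mul_robinEigen, sin_nat_mul_pi]

theorem robinEigen_eigenfunction (c : ℝ) (n : ℕ) (hn : 1 ≤ n) :
    (∀ x ∈ Set.Icc (0 : ℝ) Real.pi,
      -(deriv (deriv (robinEigen c n)) x) + c ^ 2 * robinEigen c n x =
        ((n : ℝ) ^ 2 + c ^ 2) * robinEigen c n x) ∧
    deriv (robinEigen c n) 0 - c * robinEigen c n 0 = 0 ∧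
    deriv (robinEigen c n) Real.pi - c * robinEigen c n Real.pi = 0 :=
  robinEigen_eigenfunction_general c n
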